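/- For every real number d > 0, setting r = min(2d/5, arcsinh(1)), the d-chromatic number of the hyperbolic plane satisfies χ(ℍ, d) ≤ sinh(5r/2) · sinh(d) / sinh²(r/4) + 1. -/

import Mathlib

open scoped ENNReal

/-- The distance-`d` graph of a (pseudo)metric space: vertices are the points of the space,
with an edge between two distinct points exactly when they are at distance `d`. -/
def distGraph (X : Type*) [PseudoMetricSpace X] (d : ℝ) : SimpleGraph X where
  Adj x y := x ≠ y ∧ dist x y = d
  symm := ⟨fun x y ⟨hxy, hd⟩ => ⟨hxy.symm, by rwa [dist_comm]⟩⟩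
  loopless := ⟨fun x ⟨h, _⟩ => h rfl⟩

/-!
Put `u = d / 2`. Cut `ℍ` into the horizontal strips `e^{k u} ≤ Im z < e^{(k+1) u}` and cut the
`k`-th strip into columns of Euclidean width `u e^{k u}`. A box of this grid has hyperbolic
diameter less than `d`; two points at distance `d` lie in strips at most two apart, and when they
lie in the same strip, in columns fewer than `N = ⌈(e^{2u} - 1) / u⌉ + 1` apart. Colouring a box
by its strip index mod `3` and its column index mod `N` is therefore proper. Finally
`3 N < 6 e^d + 6`, while superadditivity of `sinh` on `[0, ∞)` gives
`sinh (5r/2) ≥ 10 sinh (r/4)`, `sinh d ≥ 10 sinh (r/4)` and `sinh (r/4) ≤ 1/4`, so the stated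
bound is at least `max 100 (40 sinh d)`.
-/

open Real Set

lemma Int.eq_of_zmodCast_eq_of_abs_sub_lt {a b : ℤ} {n : ℕ} (h : (a : ZMod n) = b)
    (hlt : |a - b| < n) : a = b :=
  sub_eq_zero.1 <| eq_zero_of_abs_lt_dvd ((ZMod.intCast_eq_intCast_iff_dvd_sub b a n).1 h.symm) hlt

/-- Colour by `(k mod m, j mod n)`. -/
theorem SimpleGraph.colorable_mul_of_abs_sub_lt {V : Type*} (G : SimpleGraph V) {m n : ℕ}
    [NeZero m] [NeZero n] (k j : V → ℤ) (hk : ∀ ⦃x y⦄, G.Adj x y → |k x - k y| < m)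
    (hj : ∀ ⦃x y⦄, G.Adj x y → k x = k y → j x ≠ j y ∧ |j x - j y| < n) :
    G.Colorable (m * n) := by
  let C : G.Coloring (ZMod m × ZMod n) :=
    Coloring.mk (fun x => ((k x : ZMod m), (j x : ZMod n))) fun {x y} hxy hcol => by
      have hkxy := Int.eq_of_zmodCast_eq_of_abs_sub_lt (congrArg Prod.fst hcol) (hk hxy)
      obtain ⟨hne, hlt⟩ := hj hxy hkxy
      exact hne (Int.eq_of_zmodCast_eq_of_abs_sub_lt (congrArg Prod.snd hcol) hlt)
  simpa [ZMod.card] using C.colorable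

section Floor

variable {K : Type*} [Field K] [LinearOrder K] [IsStrictOrderedRing K] [FloorRing K]

lemma abs_floor_sub_floor_lt (a b : K) : |((⌊a⌋ - ⌊b⌋ : ℤ) : K)| < |a - b| + 1 := by
  have := Int.floor_le a
  have := Int.lt_floor_add_one a
  have := Int.floor_le b
  have := Int.lt_floor_add_one b
  rw [Int.cast_sub, abs_sub_lt_iff]
  constructor <;> linarith [le_abs_self (a - b), neg_abs_le (a - b)]

lemma abs_floor_div_sub_floor_div_lt {c : K} (hc : 0 < c) (a b : K) :
    |((⌊a / c⌋ - ⌊b / c⌋ : ℤ) : K)| < |a - b| / c + 1 := by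
  simpa only [← sub_div, abs_div, abs_of_pos hc] using abs_floor_sub_floor_lt (a / c) (b / c)

lemma abs_sub_lt_of_floor_div_eq {a b c : K} (hc : 0 < c) (h : ⌊a / c⌋ = ⌊b / c⌋) :
    |a - b| < c := by
  have := Int.abs_sub_lt_one_of_floor_eq_floor h
  rwa [← sub_div, abs_div, abs_of_pos hc, div_lt_one hc] at this

end Floor

namespace Real

lemma nat_mul_sinh_le_sinh_nat_mul (n : ℕ) {x : ℝ} (hx : 0 ≤ x) :
    n * sinh x ≤ sinh (n * x) := by
  induction n with
  | zero => simp
  | succ n ih =>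
    have hsx : 0 ≤ sinh x := sinh_nonneg_iff.2 hx
    have hsnx : 0 ≤ sinh (n * x) := sinh_nonneg_iff.2 (by positivity)
    calc ((n + 1 : ℕ) : ℝ) * sinh x = n * sinh x + sinh x := by push_cast; ring
      _ ≤ sinh (n * x) * cosh x + cosh (n * x) * sinh x := by
        nlinarith [one_le_cosh x, one_le_cosh (n * x)]
      _ = sinh ((n + 1 : ℕ) * x) := by push_cast; rw [add_mul, one_mul, sinh_add]

lemma nat_mul_sinh_div_le (n : ℕ) {x : ℝ} (hx : 0 ≤ x) : n * sinh (x / n) ≤ sinh x := by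
  rcases eq_or_ne n 0 with rfl | hn
  · simpa using sinh_nonneg_iff.2 hx
  · simpa [mul_div_cancel₀ x (Nat.cast_ne_zero.2 hn)] using
      nat_mul_sinh_le_sinh_nat_mul n (by positivity : 0 ≤ x / n)

lemma sq_two_mul_sinh_sub_sq_exp_sub_one (u : ℝ) :
    (2 * sinh u) ^ 2 - (exp u - 1) ^ 2 = (2 * sinh (u / 2)) ^ 2 * (2 + exp (-u)) := by
  have h : exp u = exp (u / 2) ^ 2 := by rw [← exp_nat_mul]; ring_nf
  simp only [sinh_eq, exp_neg, h]
  field_simp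
  ring

lemma sq_add_sq_exp_sub_one_lt_sq_two_mul_sinh {u : ℝ} (hu : 0 < u) :
    u ^ 2 + (exp u - 1) ^ 2 < (2 * sinh u) ^ 2 := by
  have h : u < 2 * sinh (u / 2) := by linarith [self_lt_sinh_iff.2 (half_pos hu)]
  nlinarith [sq_two_mul_sinh_sub_sq_exp_sub_one u, exp_pos (-u),
    pow_lt_pow_left₀ h hu.le two_ne_zero]

lemma two_mul_sinh_mul_exp (u : ℝ) : 2 * sinh u * exp u = exp (2 * u) - 1 := by
  rw [sinh_eq, two_mul u, exp_add, exp_neg]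
  field_simp

end Real

namespace UpperHalfPlane

lemma abs_re_sub_le (z w : ℍ) : |z.re - w.re| ≤ 2 * sinh (dist z w / 2) * √(z.im * w.im) := by
  have hsqrt : 0 < √(z.im * w.im) := sqrt_pos.2 (mul_pos z.im_pos w.im_pos)
  calc |z.re - w.re| = |((z : ℂ) - w).re| := by simp
    _ ≤ dist (z : ℂ) w := by rw [Complex.dist_eq]; exact Complex.abs_re_le_norm _
    _ = 2 * sinh (dist z w / 2) * √(z.im * w.im) := by rw [sinh_half_dist]; field_simp

lemma dist_lt_of_im_mem_Ico {E u : ℝ} (hE : 0 < E) (hu : 0 < u) {z w : ℍ}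
    (hz : z.im ∈ Ico E (E * exp u)) (hw : w.im ∈ Ico E (E * exp u))
    (hre : |z.re - w.re| < u * E) : dist z w < 2 * u := by
  have him : |z.im - w.im| < E * (exp u - 1) := by
    rw [abs_sub_lt_iff]; constructor <;> linarith [hz.1, hz.2, hw.1, hw.2]
  have hsq : dist (z : ℂ) w ^ 2 < (2 * sinh u * E) ^ 2 := calc
    dist (z : ℂ) w ^ 2 = |z.re - w.re| ^ 2 + |z.im - w.im| ^ 2 := by
      rw [Complex.dist_eq_re_im, sq_sqrt (by positivity), sq_abs, sq_abs]; rfl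
    _ < (u * E) ^ 2 + (E * (exp u - 1)) ^ 2 := by gcongr
    _ = E ^ 2 * (u ^ 2 + (exp u - 1) ^ 2) := by ring
    _ < E ^ 2 * (2 * sinh u) ^ 2 := by gcongr; exact sq_add_sq_exp_sub_one_lt_sq_two_mul_sinh hu
    _ = (2 * sinh u * E) ^ 2 := by ring
  have hsinh : 0 < sinh u := sinh_pos_iff.2 hu
  have hsqrt : E ≤ √(z.im * w.im) :=
    le_sqrt_of_sq_le (by nlinarith [hz.1, hw.1])
  suffices sinh (dist z w / 2) < sinh u by linarith [sinh_lt_sinh.1 this]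
  rw [sinh_half_dist, div_lt_iff₀ (by positivity)]
  calc dist (z : ℂ) w < 2 * sinh u * E := lt_of_pow_lt_pow_left₀ 2 (by positivity) hsq
    _ ≤ 2 * sinh u * √(z.im * w.im) := by gcongr
    _ = sinh u * (2 * √(z.im * w.im)) := by ring

variable {u : ℝ}

noncomputable def stripIndex (u : ℝ) (z : ℍ) : ℤ := ⌊log z.im / u⌋

noncomputable def stripBase (u : ℝ) (z : ℍ) : ℝ := exp (stripIndex u z * u)

noncomputable def columnIndex (u : ℝ) (z : ℍ) : ℤ := ⌊z.re / (u * stripBase u z)⌋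

lemma stripBase_pos (u : ℝ) (z : ℍ) : 0 < stripBase u z := exp_pos _

lemma im_mem_Ico_stripBase (hu : 0 < u) (z : ℍ) :
    z.im ∈ Ico (stripBase u z) (stripBase u z * exp u) := by
  have hlo := Int.floor_le (log z.im / u)
  have hhi := Int.lt_floor_add_one (log z.im / u)
  rw [le_div_iff₀ hu] at hlo
  rw [div_lt_iff₀ hu] at hhi
  rw [← exp_log z.im_pos, stripBase, ← exp_add, mem_Ico, exp_le_exp, exp_lt_exp]
  exact ⟨hlo, by rw [stripIndex]; linarith⟩

lemma abs_stripIndex_sub_lt (hu : 0 < u) (z w : ℍ) :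
    |((stripIndex u z - stripIndex u w : ℤ) : ℝ)| < dist z w / u + 1 := by
  have := dist_log_im_le z w
  rw [Real.dist_eq] at this
  exact (abs_floor_div_sub_floor_div_lt hu _ _).trans_le (by gcongr)

lemma abs_columnIndex_sub_lt (hu : 0 < u) {z w : ℍ} (h : stripIndex u z = stripIndex u w) :
    |((columnIndex u z - columnIndex u w : ℤ) : ℝ)| <
      2 * sinh (dist z w / 2) * exp u / u + 1 := by
  have hB : stripBase u w = stripBase u z := by rw [stripBase, stripBase, h]
  have hE := stripBase_pos u z
  have hz := im_mem_Ico_stripBase hu z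
  have hw := hB ▸ im_mem_Ico_stripBase hu w
  have hsqrt : √(z.im * w.im) ≤ stripBase u z * exp u :=
    (sqrt_le_left (by positivity)).2 (by nlinarith [hz.1, hz.2, hw.1, hw.2])
  have hsinh : 0 ≤ sinh (dist z w / 2) := sinh_nonneg_iff.2 (by positivity)
  calc _ < |z.re - w.re| / (u * stripBase u z) + 1 := by
        rw [columnIndex, columnIndex, hB]; exact abs_floor_div_sub_floor_div_lt (mul_pos hu hE) _ _
    _ ≤ 2 * sinh (dist z w / 2) * (stripBase u z * exp u) / (u * stripBase u z) + 1 := by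
        gcongr; exact (abs_re_sub_le z w).trans (by gcongr)
    _ = 2 * sinh (dist z w / 2) * exp u / u + 1 := by field_simp

lemma dist_lt_of_stripIndex_eq_of_columnIndex_eq (hu : 0 < u) {z w : ℍ}
    (hk : stripIndex u z = stripIndex u w) (hj : columnIndex u z = columnIndex u w) :
    dist z w < 2 * u := by
  have hB : stripBase u w = stripBase u z := by rw [stripBase, stripBase, hk]
  rw [columnIndex, columnIndex, hB] at hj
  have hE := stripBase_pos u z
  exact dist_lt_of_im_mem_Ico hE hu (im_mem_Ico_stripBase hu z)
    (hB ▸ im_mem_Ico_stripBase hu w) (abs_sub_lt_of_floor_div_eq (mul_pos hu hE) hj)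

theorem colorable_distGraph (hu : 0 < u) :
    (distGraph ℍ (2 * u)).Colorable (3 * (⌈(exp (2 * u) - 1) / u⌉₊ + 1)) := by
  refine (distGraph ℍ (2 * u)).colorable_mul_of_abs_sub_lt (stripIndex u) (columnIndex u)
    (fun z w hzw => ?_) (fun z w hzw hk => ⟨fun hj => ?_, ?_⟩)
  · have := abs_stripIndex_sub_lt hu z w
    rw [hzw.2, mul_div_cancel_right₀ _ hu.ne'] at this
    exact Int.cast_lt (R := ℝ) |>.1 (by push_cast at this ⊢; linarith)
  · exact (dist_lt_of_stripIndex_eq_of_columnIndex_eq hu hk hj).ne hzw.2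
  · have := abs_columnIndex_sub_lt hu hk
    rw [hzw.2, mul_div_cancel_left₀ _ two_ne_zero, two_mul_sinh_mul_exp] at this
    have hceil := Nat.le_ceil ((exp (2 * u) - 1) / u)
    exact Int.cast_lt (R := ℝ) |>.1 (by push_cast at this ⊢; linarith)

end UpperHalfPlane

lemma natCeil_exp_two_mul_sub_one_div_add_one_lt {u : ℝ} (hu : 0 < u) :
    ((⌈(exp (2 * u) - 1) / u⌉₊ + 1 : ℕ) : ℝ) < 2 * exp (2 * u) + 2 := by
  have hexp : exp (2 * u) - 1 ≤ 2 * u * exp (2 * u) := by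
    have := mul_le_mul_of_nonneg_right (one_sub_le_exp_neg (2 * u)) (exp_pos (2 * u)).le
    rw [← exp_add, neg_add_cancel, exp_zero] at this
    linarith
  have hx : 0 ≤ (exp (2 * u) - 1) / u :=
    div_nonneg (sub_nonneg.2 (one_le_exp (by positivity))) hu.le
  have hle : (exp (2 * u) - 1) / u ≤ 2 * exp (2 * u) := by
    rw [div_le_iff₀ hu]; linarith
  push_cast
  linarith [Nat.ceil_lt_add_one hx]

lemma six_mul_exp_add_five_le {d r : ℝ} (hd : 0 < d) (hr : r = min (2 * d / 5) (arsinh 1)) :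
    6 * exp d + 5 ≤ sinh (5 * r / 2) * sinh d / sinh (r / 4) ^ 2 := by
  have hr_le_d : r ≤ 2 * d / 5 := hr ▸ min_le_left _ _
  have hr_le_one : r ≤ arsinh 1 := hr ▸ min_le_right _ _
  have hr0 : 0 < r := hr ▸ lt_min (by positivity) (arsinh_pos_iff.2 one_pos)
  set s := sinh (r / 4)
  have hs : 0 < s := sinh_pos_iff.2 (by positivity)
  have hs_le_d : 10 * s ≤ sinh d := calc
    10 * s ≤ 10 * sinh (d / 10) := by gcongr; exact sinh_le_sinh.2 (by linarith)
    _ ≤ sinh d := mod_cast nat_mul_sinh_div_le 10 hd.le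
  have hs_le_r : 10 * s ≤ sinh (5 * r / 2) := by
    simpa [s, show 5 * r / 2 / 10 = r / 4 by ring] using
      nat_mul_sinh_div_le 10 (x := 5 * r / 2) (by positivity)
  have hs_le_quarter : 4 * s ≤ 1 := calc
    4 * s ≤ 4 * sinh (arsinh 1 / 4) := by gcongr; exact sinh_le_sinh.2 (by linarith)
    _ ≤ 1 := by simpa using nat_mul_sinh_div_le 4 (arsinh_nonneg_iff.2 zero_le_one)
  have hS : 10 * sinh d / s ≤ sinh (5 * r / 2) * sinh d / s ^ 2 := calc
    10 * sinh d / s = 10 * s * sinh d / s ^ 2 := by field_simp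
    _ ≤ sinh (5 * r / 2) * sinh d / s ^ 2 := by gcongr
  have h100 : 100 ≤ 10 * sinh d / s := by rw [le_div_iff₀ hs]; linarith
  have h40 : 40 * sinh d ≤ 10 * sinh d / s := by
    rw [le_div_iff₀ hs]; nlinarith [sinh_pos_iff.2 hd]
  rcases le_or_gt (exp d) 15 with hsmall | hlarge
  · linarith
  · have : exp (-d) ≤ 1 := exp_le_one_iff.2 (by linarith)
    have hsinh : 2 * sinh d = exp d - exp (-d) := by rw [sinh_eq]; ring
    linarith

/-- For every `d > 0`, with `r = min (2d/5) (arcsinh 1)`, the `d`-chromatic number of the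
hyperbolic plane is at most `sinh(5r/2) * sinh(d) / sinh²(r/4) + 1`. -/
theorem upperHalfPlane_chromatic_le (d : ℝ) (hd : 0 < d) (r : ℝ)
    (hr : r = min (2 * d / 5) (Real.arsinh 1)) :
    ((distGraph UpperHalfPlane d).chromaticNumber : ℝ≥0∞) ≤
      ENNReal.ofReal (Real.sinh (5 * r / 2) * Real.sinh d / (Real.sinh (r / 4)) ^ 2 + 1) := by
  have hu : 0 < d / 2 := half_pos hd
  have hcol := UpperHalfPlane.colorable_distGraph hu
  have hN := natCeil_exp_two_mul_sub_one_div_add_one_lt hu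
  rw [mul_div_cancel₀ d two_ne_zero] at hcol hN
  calc ((distGraph UpperHalfPlane d).chromaticNumber : ℝ≥0∞)
      ≤ ((3 * (⌈(exp d - 1) / (d / 2)⌉₊ + 1) : ℕ) : ℝ≥0∞) := mod_cast hcol.chromaticNumber_le
    _ = ENNReal.ofReal ((3 * (⌈(exp d - 1) / (d / 2)⌉₊ + 1) : ℕ) : ℝ) :=
      (ENNReal.ofReal_natCast _).symm
    _ ≤ _ := ENNReal.ofReal_le_ofReal <| by
      push_cast at hN ⊢
      linarith [six_mul_exp_add_five_le hd hr]
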